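/- arXiv:2301.07170 — 7 statements merged into one kernel-verified Lean document; each statement's English description precedes it below -/
import Mathlib

section
/- Let n ≥ 1 be a natural number and let γ, w, w′ be real numbers with γ = w + w′ + n + 1 and γ > 0. Let j, k be natural numbers and assume j − w > 0, k − w′ > 0, k − 1 + γ − w′ > 0, and that either k = 0 or k − 1 − w′ > 0. Then (λ^γ_{j+1}(w) − λ^γ_j(w))·λ^γ_k(w′) + (k/(n+j+k))·(λ^γ_j(w)·λ^γ_{k−1}(w′) − λ^γ_{j+1}(w)·λ^γ_k(w′)) = γ·(γ−1−w′)·λ^{γ−1}_j(w−1)·λ^{γ−1}_k(w′), where explicitly λ^{γ−1}_j(w−1) = Γ(j+γ−w)/Γ(j+1−w) and λ^{γ−1}_k(w′) = Γ(k+γ−1−w′)/Γ(k−w′). -/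
open Real

/-- the spectral content of the commutator identity
`Σ_j z̄_j[𝒜_{w,w′}, z_j] = γ(γ−1−w′)𝒜_{w−1,w′}` on the CR sphere `S^{2n+1}`.
Here `λ^γ_j(w) = Γ(j+γ−w)/Γ(j−w)` is written out explicitly via `Real.Gamma`. -/
theorem stmt_0 (n : ℕ) (hn : 1 ≤ n) (γ w w' : ℝ)
    (hγ : γ = w + w' + n + 1) (hγpos : 0 < γ) (j k : ℕ)
    (hjw : 0 < (j : ℝ) - w) (hkw : 0 < (k : ℝ) - w')
    (hk1 : 0 < (k : ℝ) - 1 + γ - w')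
    (hk0 : k = 0 ∨ 0 < (k : ℝ) - 1 - w') :
    (Gamma ((j : ℝ) + 1 + γ - w) / Gamma ((j : ℝ) + 1 - w) -
        Gamma ((j : ℝ) + γ - w) / Gamma ((j : ℝ) - w)) *
      (Gamma ((k : ℝ) + γ - w') / Gamma ((k : ℝ) - w')) +
    ((k : ℝ) / ((n : ℝ) + j + k)) *
      (Gamma ((j : ℝ) + γ - w) / Gamma ((j : ℝ) - w) *
          (Gamma ((k : ℝ) - 1 + γ - w') / Gamma ((k : ℝ) - 1 - w')) -
        Gamma ((j : ℝ) + 1 + γ - w) / Gamma ((j : ℝ) + 1 - w) *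
          (Gamma ((k : ℝ) + γ - w') / Gamma ((k : ℝ) - w'))) =
    γ * (γ - 1 - w') * (Gamma ((j : ℝ) + γ - w) / Gamma ((j : ℝ) + 1 - w)) *
      (Gamma ((k : ℝ) + γ - 1 - w') / Gamma ((k : ℝ) - w')) := by
  have ha : 0 < (j : ℝ) + γ - w := by linarith
  have h1 : Gamma ((j : ℝ) + 1 + γ - w) = ((j : ℝ) + γ - w) * Gamma ((j : ℝ) + γ - w) := by
    rw [show (j : ℝ) + 1 + γ - w = ((j : ℝ) + γ - w) + 1 by ring, Real.Gamma_add_one ha.ne']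
  have h2 : Gamma ((j : ℝ) + 1 - w) = ((j : ℝ) - w) * Gamma ((j : ℝ) - w) := by
    rw [show (j : ℝ) + 1 - w = ((j : ℝ) - w) + 1 by ring, Real.Gamma_add_one hjw.ne']
  have h3 : Gamma ((k : ℝ) + γ - w') = ((k : ℝ) - 1 + γ - w') * Gamma ((k : ℝ) - 1 + γ - w') := by
    rw [show (k : ℝ) + γ - w' = ((k : ℝ) - 1 + γ - w') + 1 by ring, Real.Gamma_add_one hk1.ne']
  have h5 : Gamma ((k : ℝ) + γ - 1 - w') = Gamma ((k : ℝ) - 1 + γ - w') := by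
    congr 1; ring
  have hGb : Gamma ((j : ℝ) - w) ≠ 0 := (Real.Gamma_pos_of_pos hjw).ne'
  have hGd : Gamma ((k : ℝ) - w') ≠ 0 := (Real.Gamma_pos_of_pos hkw).ne'
  have hnjk : (n : ℝ) + j + k ≠ 0 := by
    have : (1 : ℝ) ≤ (n : ℝ) := by exact_mod_cast hn
    positivity
  rcases hk0 with hk0 | hk0
  · subst hk0
    push_cast at h3 h5 hGd ⊢
    rw [h1, h2, h3, h5, zero_div, zero_mul, add_zero]
    have e1 : ((j : ℝ) + γ - w) * Gamma ((j : ℝ) + γ - w) / (((j : ℝ) - w) * Gamma ((j : ℝ) - w)) -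
        Gamma ((j : ℝ) + γ - w) / Gamma ((j : ℝ) - w) =
        γ * (Gamma ((j : ℝ) + γ - w) / (((j : ℝ) - w) * Gamma ((j : ℝ) - w))) := by
      field_simp [hGb, hjw.ne']
      ring
    rw [e1]
    ring
  · have h4 : Gamma ((k : ℝ) - w') = ((k : ℝ) - 1 - w') * Gamma ((k : ℝ) - 1 - w') := by
      rw [show (k : ℝ) - w' = ((k : ℝ) - 1 - w') + 1 by ring, Real.Gamma_add_one hk0.ne']
    have hGd1 : Gamma ((k : ℝ) - 1 - w') ≠ 0 := (Real.Gamma_pos_of_pos hk0).ne'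
    rw [h1, h2, h3, h4, h5]
    field_simp [hGb, hGd1, hnjk, hjw.ne', hk0.ne']
    subst hγ
    ring
end

section
/- Let N ≥ 2 be a natural number and set n := N − 1. Let γ, w, w′ be real numbers with γ = w + w′ + n + 1 and γ > 0, and let j, k be natural numbers with j − w > 0, k − w′ > 0, k − 1 + γ − w′ > 0, and either k = 0 or k − 1 − w′ > 0. Let Y be a polynomial over ℂ in the variables indexed by Fin N ⊕ Fin N which is bihomogeneous of bidegree (j,k) and formally harmonic. Then for every z ∈ ℂ^N with Σ_{i} z_i·conj(z_i) = 1, writing Ŷ(z) for the evaluation of Y at z and (∂_{inr l}Y)^(z) for the evaluation of pderiv(inr l) Y at z, one has: Σ_{l} conj(z_l)·( λ^γ_{j+1}(w)·λ^γ_k(w′)·( z_l·Ŷ(z) − (1/(n+j+k))·(∂_{inr l}Y)^(z) ) + (λ^γ_j(w)·λ^γ_{k−1}(w′)/(n+j+k))·(∂_{inr l}Y)^(z) ) − λ^γ_j(w)·λ^γ_k(w′)·Ŷ(z) = γ·(γ−1−w′)·λ^{γ−1}_j(w−1)·λ^{γ−1}_k(w′)·Ŷ(z), where λ^{γ−1}_j(w−1)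 = Γ(j+γ−w)/Γ(j+1−w) and λ^{γ−1}_k(w′) = Γ(k+γ−1−w′)/Γ(k−w′). -/
open Real MvPolynomial

/-- `P` is bihomogeneous of bidegree `(j,k)`: every monomial has total degree
`j` in the `inl`-variables (the `z_i`) and total degree `k` in the
`inr`-variables (the `z̄_i`). -/
def IsBihomogeneous {N : ℕ} (P : MvPolynomial (Fin N ⊕ Fin N) ℂ) (j k : ℕ) : Prop :=
  ∀ m ∈ P.support, (∑ i : Fin N, m (Sum.inl i)) = j ∧ (∑ i : Fin N, m (Sum.inr i)) = k

/-- `P` is formally harmonic: `Σ_i ∂_{z_i} ∂_{z̄_i} P = 0`. -/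
def IsFormallyHarmonic {N : ℕ} (P : MvPolynomial (Fin N ⊕ Fin N) ℂ) : Prop :=
  ∑ i : Fin N, pderiv (Sum.inl i) (pderiv (Sum.inr i) P) = 0

lemma euler_aux {N : ℕ} (m : (Fin N ⊕ Fin N) →₀ ℕ) (c : ℂ) (i : Fin N ⊕ Fin N) :
    X i * pderiv i (monomial m c) = monomial m ((m i : ℂ) * c) := by
  rw [pderiv_monomial]
  rcases Nat.eq_zero_or_pos (m i) with h | h
  · simp [h]
  · rw [X, monomial_mul, one_mul]
    congr 1
    · rw [add_comm, tsub_add_cancel_of_le (Finsupp.single_le_iff.mpr h)]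
    · exact mul_comm _ _

lemma euler {N : ℕ} (P : MvPolynomial (Fin N ⊕ Fin N) ℂ) (k : ℕ)
    (h : ∀ m ∈ P.support, (∑ i : Fin N, m (Sum.inr i)) = k) :
    ∑ l : Fin N, X (Sum.inr l) * pderiv (Sum.inr l) P = (k : ℂ) • P := by
  conv_lhs => rw [P.as_sum]
  conv_rhs => rw [P.as_sum]
  simp_rw [map_sum, Finset.mul_sum, euler_aux]
  rw [Finset.smul_sum]
  rw [Finset.sum_comm]
  refine Finset.sum_congr rfl fun m hm => ?_
  rw [← map_sum (monomial m : ℂ →ₗ[ℂ] MvPolynomial (Fin N ⊕ Fin N) ℂ)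
      (fun l => ((m (Sum.inr l) : ℂ) * coeff m P)) Finset.univ,
    ← Finset.sum_mul, ← Nat.cast_sum, h m hm, smul_monomial, smul_eq_mul]

lemma key_real (n : ℕ) (hn : 1 ≤ n) (γ w w' : ℝ)
    (hγ : γ = w + w' + n + 1) (hγpos : 0 < γ) (j k : ℕ)
    (hjw : 0 < (j:ℝ) - w) (hkw : 0 < (k:ℝ) - w')
    (hk1 : 0 < (k:ℝ) - 1 + γ - w') (hk0 : k = 0 ∨ 0 < (k:ℝ) - 1 - w') :
    Gamma ((j:ℝ)+1+γ-w)/Gamma ((j:ℝ)+1-w) * (Gamma ((k:ℝ)+γ-w')/Gamma ((k:ℝ)-w'))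
    + (Gamma ((j:ℝ)+γ-w)/Gamma ((j:ℝ)-w) * (Gamma ((k:ℝ)-1+γ-w')/Gamma ((k:ℝ)-1-w')) / ((n:ℝ)+j+k)
       - Gamma ((j:ℝ)+1+γ-w)/Gamma ((j:ℝ)+1-w) * (Gamma ((k:ℝ)+γ-w')/Gamma ((k:ℝ)-w')) * (1/((n:ℝ)+j+k))) * k
    - Gamma ((j:ℝ)+γ-w)/Gamma ((j:ℝ)-w) * (Gamma ((k:ℝ)+γ-w')/Gamma ((k:ℝ)-w'))
    = γ*(γ-1-w') * (Gamma ((j:ℝ)+γ-w)/Gamma ((j:ℝ)+1-w)) * (Gamma ((k:ℝ)+γ-1-w')/Gamma ((k:ℝ)-w')) := by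
  have ha : (0:ℝ) < (j:ℝ)+γ-w := by linarith
  have e1 : Gamma ((j:ℝ)+1+γ-w) = ((j:ℝ)+γ-w) * Gamma ((j:ℝ)+γ-w) := by
    rw [show (j:ℝ)+1+γ-w = ((j:ℝ)+γ-w)+1 by ring, Real.Gamma_add_one ha.ne']
  have e2 : Gamma ((j:ℝ)+1-w) = ((j:ℝ)-w) * Gamma ((j:ℝ)-w) := by
    rw [show (j:ℝ)+1-w = ((j:ℝ)-w)+1 by ring, Real.Gamma_add_one hjw.ne']
  have e3 : Gamma ((k:ℝ)+γ-w') = ((k:ℝ)+γ-1-w') * Gamma ((k:ℝ)+γ-1-w') := by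
    rw [show (k:ℝ)+γ-w' = ((k:ℝ)+γ-1-w')+1 by ring, Real.Gamma_add_one (by linarith)]
  have hGj : (0:ℝ) < Gamma ((j:ℝ)-w) := Real.Gamma_pos_of_pos hjw
  have hs : (0:ℝ) < (n:ℝ)+j+k := by
    have h1 : (1:ℝ) ≤ (n:ℝ) := by exact_mod_cast hn
    have h2 : (0:ℝ) ≤ (j:ℝ) := Nat.cast_nonneg j
    have h3 : (0:ℝ) ≤ (k:ℝ) := Nat.cast_nonneg k
    linarith
  rcases hk0 with hk | hk
  · subst hk
    norm_num at hkw hk1 ⊢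
    have e3' : Gamma (γ - w') = (γ - 1 - w') * Gamma (γ - 1 - w') := by
      rw [show γ - w' = (γ - 1 - w') + 1 by ring, Real.Gamma_add_one (by linarith)]
    have hG2 : Gamma (-w') ≠ 0 := (Real.Gamma_pos_of_pos (by linarith)).ne'
    rw [e1, e2, e3']
    field_simp
    ring
  · have e4 : Gamma ((k:ℝ)-w') = ((k:ℝ)-1-w') * Gamma ((k:ℝ)-1-w') := by
      rw [show (k:ℝ)-w' = ((k:ℝ)-1-w')+1 by ring, Real.Gamma_add_one hk.ne']
    have e5 : Gamma ((k:ℝ)-1+γ-w') = Gamma ((k:ℝ)+γ-1-w') := by ring_nf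
    have hGk : (0:ℝ) < Gamma ((k:ℝ)-1-w') := Real.Gamma_pos_of_pos hk
    rw [e1, e2, e3, e4, e5]
    subst hγ
    field_simp
    ring

/-- the commutator identity
`Σ_l z̄_l[𝒜_{w,w′}, z_l]Y = γ(γ−1−w′)𝒜_{w−1,w′}Y` of Theorem 1.3, evaluated on a
spherical harmonic `Y` of bidegree `(j,k)` at a point of `S^{2n+1} ⊂ ℂ^N`,
`n = N − 1`, using the harmonic decomposition
`z_l·Y = (z_l·Y − |z|²∂̄_l Y/(n+j+k)) + |z|²∂̄_l Y/(n+j+k)`.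
Here `λ^γ_j(w) = Γ(j+γ−w)/Γ(j−w)` is written out via `Real.Gamma`. -/
theorem stmt_1 (N : ℕ) (hN : 2 ≤ N) (γ w w' : ℝ)
    (hγ : γ = w + w' + ((N - 1 : ℕ) : ℝ) + 1) (hγpos : 0 < γ)
    (j k : ℕ)
    (hjw : 0 < (j : ℝ) - w) (hkw : 0 < (k : ℝ) - w')
    (hk1 : 0 < (k : ℝ) - 1 + γ - w')
    (hk0 : k = 0 ∨ 0 < (k : ℝ) - 1 - w')
    (Y : MvPolynomial (Fin N ⊕ Fin N) ℂ)
    (hbi : IsBihomogeneous Y j k) (hharm : IsFormallyHarmonic Y)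
    (z : Fin N → ℂ) (hz : ∑ i : Fin N, z i * (starRingEnd ℂ) (z i) = 1) :
    ∑ l : Fin N, (starRingEnd ℂ) (z l) *
        (((Gamma ((j : ℝ) + 1 + γ - w) / Gamma ((j : ℝ) + 1 - w) *
              (Gamma ((k : ℝ) + γ - w') / Gamma ((k : ℝ) - w')) : ℝ) : ℂ) *
            (z l * eval (Sum.elim z fun i => (starRingEnd ℂ) (z i)) Y -
              (1 / (((N - 1 : ℕ) : ℂ) + j + k)) *
                eval (Sum.elim z fun i => (starRingEnd ℂ) (z i)) (pderiv (Sum.inr l) Y)) +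
          ((Gamma ((j : ℝ) + γ - w) / Gamma ((j : ℝ) - w) *
              (Gamma ((k : ℝ) - 1 + γ - w') / Gamma ((k : ℝ) - 1 - w')) : ℝ) : ℂ) /
              (((N - 1 : ℕ) : ℂ) + j + k) *
            eval (Sum.elim z fun i => (starRingEnd ℂ) (z i)) (pderiv (Sum.inr l) Y)) -
      ((Gamma ((j : ℝ) + γ - w) / Gamma ((j : ℝ) - w) *
          (Gamma ((k : ℝ) + γ - w') / Gamma ((k : ℝ) - w')) : ℝ) : ℂ) *
        eval (Sum.elim z fun i => (starRingEnd ℂ) (z i)) Y =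
    ((γ * (γ - 1 - w') * (Gamma ((j : ℝ) + γ - w) / Gamma ((j : ℝ) + 1 - w)) *
        (Gamma ((k : ℝ) + γ - 1 - w') / Gamma ((k : ℝ) - w')) : ℝ) : ℂ) *
      eval (Sum.elim z fun i => (starRingEnd ℂ) (z i)) Y := by
  have hbk : ∀ m ∈ Y.support, (∑ i : Fin N, m (Sum.inr i)) = k := fun m hm => (hbi m hm).2
  have hE := congrArg (eval (Sum.elim z fun i => (starRingEnd ℂ) (z i))) (euler Y k hbk)
  simp only [map_sum, eval_mul, eval_X, Sum.elim_inr, smul_eq_C_mul, eval_C] at hE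
  have hz' : ∑ l : Fin N, (starRingEnd ℂ) (z l) * z l = 1 := by
    rw [← hz]; exact Finset.sum_congr rfl fun i _ => mul_comm _ _
  have hsum : ∑ l : Fin N, (starRingEnd ℂ) (z l) *
        (((Gamma ((j : ℝ) + 1 + γ - w) / Gamma ((j : ℝ) + 1 - w) *
              (Gamma ((k : ℝ) + γ - w') / Gamma ((k : ℝ) - w')) : ℝ) : ℂ) *
            (z l * eval (Sum.elim z fun i => (starRingEnd ℂ) (z i)) Y -
              (1 / (((N - 1 : ℕ) : ℂ) + j + k)) *
                eval (Sum.elim z fun i => (starRingEnd ℂ) (z i)) (pderiv (Sum.inr l) Y)) +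
          ((Gamma ((j : ℝ) + γ - w) / Gamma ((j : ℝ) - w) *
              (Gamma ((k : ℝ) - 1 + γ - w') / Gamma ((k : ℝ) - 1 - w')) : ℝ) : ℂ) /
              (((N - 1 : ℕ) : ℂ) + j + k) *
            eval (Sum.elim z fun i => (starRingEnd ℂ) (z i)) (pderiv (Sum.inr l) Y))
      = ∑ l : Fin N,
        (((Gamma ((j : ℝ) + 1 + γ - w) / Gamma ((j : ℝ) + 1 - w) *
              (Gamma ((k : ℝ) + γ - w') / Gamma ((k : ℝ) - w')) : ℝ) : ℂ) *
            eval (Sum.elim z fun i => (starRingEnd ℂ) (z i)) Y * ((starRingEnd ℂ) (z l) * z l) +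
          (((Gamma ((j : ℝ) + γ - w) / Gamma ((j : ℝ) - w) *
              (Gamma ((k : ℝ) - 1 + γ - w') / Gamma ((k : ℝ) - 1 - w')) : ℝ) : ℂ) /
              (((N - 1 : ℕ) : ℂ) + j + k) -
            ((Gamma ((j : ℝ) + 1 + γ - w) / Gamma ((j : ℝ) + 1 - w) *
              (Gamma ((k : ℝ) + γ - w') / Gamma ((k : ℝ) - w')) : ℝ) : ℂ) *
              (1 / (((N - 1 : ℕ) : ℂ) + j + k))) *
            ((starRingEnd ℂ) (z l) *
              eval (Sum.elim z fun i => (starRingEnd ℂ) (z i)) (pderiv (Sum.inr l) Y))) :=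
    Finset.sum_congr rfl fun l _ => by ring
  rw [hsum, Finset.sum_add_distrib, ← Finset.mul_sum, ← Finset.mul_sum, hz', hE, mul_one]
  have hncast : ((N - 1 : ℕ) : ℂ) + j + k = ((((N - 1 : ℕ) : ℝ) + j + k : ℝ) : ℂ) := by
    push_cast; ring
  have hn1 : 1 ≤ N - 1 := by omega
  have hreal := key_real (N - 1) hn1 γ w w' hγ hγpos j k hjw hkw hk1 hk0
  have key : ((Gamma ((j : ℝ) + 1 + γ - w) / Gamma ((j : ℝ) + 1 - w) *
              (Gamma ((k : ℝ) + γ - w') / Gamma ((k : ℝ) - w')) : ℝ) : ℂ) +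
      (((Gamma ((j : ℝ) + γ - w) / Gamma ((j : ℝ) - w) *
              (Gamma ((k : ℝ) - 1 + γ - w') / Gamma ((k : ℝ) - 1 - w')) : ℝ) : ℂ) /
              (((N - 1 : ℕ) : ℂ) + j + k) -
        ((Gamma ((j : ℝ) + 1 + γ - w) / Gamma ((j : ℝ) + 1 - w) *
              (Gamma ((k : ℝ) + γ - w') / Gamma ((k : ℝ) - w')) : ℝ) : ℂ) *
          (1 / (((N - 1 : ℕ) : ℂ) + j + k))) * (k : ℂ) -
      ((Gamma ((j : ℝ) + γ - w) / Gamma ((j : ℝ) - w) *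
          (Gamma ((k : ℝ) + γ - w') / Gamma ((k : ℝ) - w')) : ℝ) : ℂ) =
      ((γ * (γ - 1 - w') * (Gamma ((j : ℝ) + γ - w) / Gamma ((j : ℝ) + 1 - w)) *
        (Gamma ((k : ℝ) + γ - 1 - w') / Gamma ((k : ℝ) - w')) : ℝ) : ℂ) := by
    rw [hncast]
    exact_mod_cast hreal
  linear_combination key * eval (Sum.elim z fun i => (starRingEnd ℂ) (z i)) Y
end

section
/- Let n ≥ 1 and h ≥ 1 be natural numbers and let γ be a real number with 0 < γ < n/2. Define μ_s := Γ(s + n/2 + γ)/Γ(s + n/2 − γ) for s ∈ {h−1, h, h+1}. Then (μ_{h+1} − μ_h) + (h/(1 − n − 2h))·(μ_{h+1} − μ_{h−1}) = γ·(n + 2γ − 2)·Γ(h + n/2 + γ − 1)/Γ(h + n/2 − γ + 1). -/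
/-!
Write `α = h - 1 + n/2 + γ`, `β = h - 1 + n/2 - γ` and `r = Γ(α)/Γ(β)`. By `Γ(s + 1) = s Γ(s)`,
`μ_{h-1} = r`, `μ_h = (α/β) r` and `μ_{h+1} = α(α+1)/(β(β+1)) r`, while the right-hand side is
`γ(n + 2γ - 2) r/(β(β+1))`. Since `α(α+1) - β(β+1) = (α - β)(α + β + 1)` and
`1 - n - 2h = -(α + β + 1)`, the identity reduces to `(α - β)(α - h) = γ(n + 2γ - 2)`.
-/

open Real

theorem Real.Gamma_add_one_div_Gamma_add_one {x y : ℝ} (hx : x ≠ 0) (hy : y ≠ 0) :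
    Gamma (x + 1) / Gamma (y + 1) = x / y * (Gamma x / Gamma y) := by
  rw [Gamma_add_one hx, Gamma_add_one hy, mul_div_mul_comm]

theorem Real.Gamma_add_two_div_Gamma_add_two {x y : ℝ} (hx : 0 < x) (hy : 0 < y) :
    Gamma (x + 2) / Gamma (y + 2) = x * (x + 1) / (y * (y + 1)) * (Gamma x / Gamma y) := by
  rw [show x + 2 = x + 1 + 1 by ring, show y + 2 = y + 1 + 1 by ring,
    Gamma_add_one_div_Gamma_add_one (by positivity) (by positivity),
    Gamma_add_one_div_Gamma_add_one hx.ne' hy.ne']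
  field_simp

theorem Real.Gamma_div_Gamma_add_two {x y : ℝ} (hy : 0 < y) :
    Gamma x / Gamma (y + 2) = Gamma x / Gamma y / (y * (y + 1)) := by
  rw [show y + 2 = y + 1 + 1 by ring, Gamma_add_one (by positivity), Gamma_add_one hy.ne',
    div_div]
  ring_nf

theorem Real.Gamma_ratio_three_term {α β : ℝ} (hα : 0 < α) (hβ : 0 < β) (c : ℝ) :
    (Gamma (α + 2) / Gamma (β + 2) - Gamma (α + 1) / Gamma (β + 1)) -
        c / (α + β + 1) * (Gamma (α + 2) / Gamma (β + 2) - Gamma α / Gamma β) =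
      (α - β) * (α - c) * (Gamma α / Gamma (β + 2)) := by
  rw [Gamma_add_two_div_Gamma_add_two hα hβ, Gamma_add_one_div_Gamma_add_one hα.ne' hβ.ne',
    Gamma_div_Gamma_add_two hβ]
  generalize Gamma α / Gamma β = r
  have : α + β + 1 ≠ 0 := by positivity
  field_simp
  ring

theorem stmt_2_general (n h : ℕ) (hh : 1 ≤ h) (γ : ℝ)
    (hγ0 : 0 < γ) (hγn : γ < (n : ℝ) / 2) :
    (Gamma (((h : ℝ) + 1) + (n : ℝ) / 2 + γ) / Gamma (((h : ℝ) + 1) + (n : ℝ) / 2 - γ) -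
        Gamma ((h : ℝ) + (n : ℝ) / 2 + γ) / Gamma ((h : ℝ) + (n : ℝ) / 2 - γ)) +
      ((h : ℝ) / (1 - (n : ℝ) - 2 * (h : ℝ))) *
        (Gamma (((h : ℝ) + 1) + (n : ℝ) / 2 + γ) / Gamma (((h : ℝ) + 1) + (n : ℝ) / 2 - γ) -
          Gamma (((h : ℝ) - 1) + (n : ℝ) / 2 + γ) / Gamma (((h : ℝ) - 1) + (n : ℝ) / 2 - γ)) =
    γ * ((n : ℝ) + 2 * γ - 2) *
      (Gamma ((h : ℝ) + (n : ℝ) / 2 + γ - 1) / Gamma ((h : ℝ) + (n : ℝ) / 2 - γ + 1)) := by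
  have hh' : (1 : ℝ) ≤ h := by exact_mod_cast hh
  have key := Gamma_ratio_three_term (α := h - 1 + n / 2 + γ) (β := h - 1 + n / 2 - γ)
    (by linarith) (by linarith) h
  rw [show (1 : ℝ) - n - 2 * h = -((h - 1 + n / 2 + γ) + (h - 1 + n / 2 - γ) + 1) by ring,
    div_neg, neg_mul, ← sub_eq_add_neg]
  convert key using 2 <;> ring_nf

/-- the spectral content of the commutator identity
`Σ_j x_j[P_{2γ}, x_j] = γ(n + 2γ − 2)P_{2(γ−1)}` on the round sphere `S^n`,
where `μ_s = Γ(s + n/2 + γ)/Γ(s + n/2 − γ)`. -/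
theorem stmt_2 (n h : ℕ) (hn : 1 ≤ n) (hh : 1 ≤ h) (γ : ℝ)
    (hγ0 : 0 < γ) (hγn : γ < (n : ℝ) / 2) :
    (Gamma (((h : ℝ) + 1) + (n : ℝ) / 2 + γ) / Gamma (((h : ℝ) + 1) + (n : ℝ) / 2 - γ) -
        Gamma ((h : ℝ) + (n : ℝ) / 2 + γ) / Gamma ((h : ℝ) + (n : ℝ) / 2 - γ)) +
      ((h : ℝ) / (1 - (n : ℝ) - 2 * (h : ℝ))) *
        (Gamma (((h : ℝ) + 1) + (n : ℝ) / 2 + γ) / Gamma (((h : ℝ) + 1) + (n : ℝ) / 2 - γ) -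
          Gamma (((h : ℝ) - 1) + (n : ℝ) / 2 + γ) / Gamma (((h : ℝ) - 1) + (n : ℝ) / 2 - γ)) =
    γ * ((n : ℝ) + 2 * γ - 2) *
      (Gamma ((h : ℝ) + (n : ℝ) / 2 + γ - 1) / Gamma ((h : ℝ) + (n : ℝ) / 2 - γ + 1)) :=
  stmt_2_general n h hh γ hγ0 hγn
end

section
/- Let n ≥ 2 be a natural number, let γ be a real number with 0 < γ < n/2, and let h be a natural number. Let Y be a polynomial over ℝ in n+1 variables (MvPolynomial (Fin (n+1)) ℝ) which is homogeneous of degree h and formally harmonic. Define μ_s := Γ(s + n/2 + γ)/Γ(s + n/2 − γ). Then for every x ∈ ℝ^{n+1} with Σ_i x_i² = 1, writing Ŷ(x) for the evaluation of Y at x and (∂_jY)^(x) for the evaluation of pderiv j Y at x, one has: Σ_{j} x_j·( μ_{h+1}·( x_j·Ŷ(x) + (1/(1 − n − 2h))·(∂_jY)^(x) ) − μ_{h−1}·(1/(1 − n − 2h))·(∂_jY)^(x) ) − μ_h·Ŷ(x) = γ·(n + 2γ − 2)·(Γ(h + n/2 + γ − 1)/Γ(h + n/2 − γ + 1))·Ŷ(x).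 -/
open Real MvPolynomial

/-- `P` is formally harmonic: `Σ_i ∂_i ∂_i P = 0`. -/
def IsFormallyHarmonicReal {N : ℕ} (P : MvPolynomial (Fin N) ℝ) : Prop :=
  ∑ i : Fin N, pderiv i (pderiv i P) = 0

/-!
On the sphere, Euler's identity `Σ_j x_j ∂_j Y = h Y` and `Σ_j x_j² = 1` collapse the left-hand
side to `(μ_{h+1} + h (μ_{h+1} - μ_{h-1}) / (1 - n - 2h) - μ_h) Y`, so the statement becomes an
identity between Gamma ratios. With `a = h + n/2` and `R = Γ(a + γ - 1) / Γ(a - γ + 1)`, the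
functional equation gives `μ_{h+1} - μ_h = 2γ (a + γ - 1) R` and
`μ_{h+1} - μ_{h-1} = 2γ (2a - 1) R`, and `1 - n - 2h = 1 - 2a` cancels the factor `2a - 1`.
-/

theorem MvPolynomial.IsHomogeneous.sum_mul_eval_pderiv {σ R : Type*} [Fintype σ] [CommSemiring R]
    {φ : MvPolynomial σ R} {n : ℕ} (hφ : φ.IsHomogeneous n) (x : σ → R) :
    ∑ i, x i * eval x (pderiv i φ) = n * eval x φ := by
  simpa using congrArg (eval x) hφ.sum_X_mul_pderiv

theorem sum_mul_harmonic_decomposition {σ : Type*} [Fintype σ] {Y : MvPolynomial σ ℝ} {h : ℕ}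
    (hY : Y.IsHomogeneous h) {x : σ → ℝ} (hx : ∑ i, x i ^ 2 = 1) (A B d : ℝ) :
    ∑ j, x j * (A * (x j * eval x Y + d * eval x (pderiv j Y)) - B * d * eval x (pderiv j Y)) =
      (A + (A - B) * d * h) * eval x Y := by
  have hterm : ∀ j, x j * (A * (x j * eval x Y + d * eval x (pderiv j Y)) -
      B * d * eval x (pderiv j Y)) =
      A * eval x Y * x j ^ 2 + (A - B) * d * (x j * eval x (pderiv j Y)) := fun j => by ring
  rw [Finset.sum_congr rfl fun j _ => hterm j, Finset.sum_add_distrib, ← Finset.mul_sum,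
    ← Finset.mul_sum, hx, hY.sum_mul_eval_pderiv]
  ring

namespace Real

theorem Gamma_add_one_div_Gamma {u : ℝ} (hu : u ≠ 0) (v : ℝ) :
    Gamma (u + 1) / Gamma v = u * (Gamma u / Gamma v) := by
  rw [Gamma_add_one hu, mul_div_assoc]

theorem Gamma_div_Gamma_eq_mul_div_Gamma_add_one (u : ℝ) {v : ℝ} (hv : v ≠ 0) :
    Gamma u / Gamma v = v * (Gamma u / Gamma (v + 1)) := by
  rw [Gamma_add_one hv, ← mul_div_assoc, mul_div_mul_left _ _ hv]

end Real

/-- The paper's `μ_s`. -/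
noncomputable def conformalEigenvalue (n γ s : ℝ) : ℝ :=
  Gamma (s + n / 2 + γ) / Gamma (s + n / 2 - γ)

section ConformalEigenvalue

variable {n γ s : ℝ}

local notation "R" => Gamma (s + n / 2 + γ - 1) / Gamma (s + n / 2 - γ + 1)

theorem conformalEigenvalue_add_one (hp : s + n / 2 + γ ≠ 0) (hp₁ : s + n / 2 + γ - 1 ≠ 0) :
    conformalEigenvalue n γ (s + 1) = (s + n / 2 + γ) * (s + n / 2 + γ - 1) * R := by
  rw [conformalEigenvalue, show s + 1 + n / 2 + γ = s + n / 2 + γ - 1 + 1 + 1 by ring,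
    show s + 1 + n / 2 - γ = s + n / 2 - γ + 1 by ring, Gamma_add_one_div_Gamma (by simpa),
    Gamma_add_one_div_Gamma hp₁, sub_add_cancel, mul_assoc]

theorem conformalEigenvalue_eq_mul (hp₁ : s + n / 2 + γ - 1 ≠ 0) (hm : s + n / 2 - γ ≠ 0) :
    conformalEigenvalue n γ s = (s + n / 2 - γ) * (s + n / 2 + γ - 1) * R := by
  rw [conformalEigenvalue, Gamma_div_Gamma_eq_mul_div_Gamma_add_one _ hm,
    show s + n / 2 + γ = s + n / 2 + γ - 1 + 1 by ring, Gamma_add_one_div_Gamma hp₁, sub_add_cancel,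
    mul_assoc]

theorem conformalEigenvalue_sub_one (hm : s + n / 2 - γ ≠ 0) (hm₁ : s + n / 2 - γ - 1 ≠ 0) :
    conformalEigenvalue n γ (s - 1) = (s + n / 2 - γ - 1) * (s + n / 2 - γ) * R := by
  rw [conformalEigenvalue, show s - 1 + n / 2 + γ = s + n / 2 + γ - 1 by ring,
    show s - 1 + n / 2 - γ = s + n / 2 - γ - 1 by ring,
    Gamma_div_Gamma_eq_mul_div_Gamma_add_one _ hm₁, sub_add_cancel,
    Gamma_div_Gamma_eq_mul_div_Gamma_add_one _ hm, mul_assoc]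

end ConformalEigenvalue

theorem conformalEigenvalue_commutator {n γ : ℝ} (hn : 2 ≤ n) (hγ0 : 0 < γ) (hγn : γ < n / 2)
    (h : ℕ) :
    conformalEigenvalue n γ (h + 1) +
        (conformalEigenvalue n γ (h + 1) - conformalEigenvalue n γ (h - 1)) *
          (1 / (1 - n - 2 * h)) * h - conformalEigenvalue n γ h =
      γ * (n + 2 * γ - 2) * (Gamma (h + n / 2 + γ - 1) / Gamma (h + n / 2 - γ + 1)) := by
  have hh : (0 : ℝ) ≤ h := h.cast_nonneg
  have hp : (h + n / 2 + γ : ℝ) ≠ 0 := by linarith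
  have hp₁ : (h + n / 2 + γ - 1 : ℝ) ≠ 0 := by linarith
  have hm : (h + n / 2 - γ : ℝ) ≠ 0 := by linarith
  rcases h.eq_zero_or_pos with rfl | hpos
  · rw [conformalEigenvalue_add_one hp hp₁,
      conformalEigenvalue_eq_mul hp₁ hm]
    ring
  · have hm₁ : (h + n / 2 - γ - 1 : ℝ) ≠ 0 := by
      have : (1 : ℝ) ≤ h := by exact_mod_cast hpos
      linarith
    have hd : (1 - n - 2 * h : ℝ) ≠ 0 := by linarith
    rw [conformalEigenvalue_add_one hp hp₁, conformalEigenvalue_eq_mul hp₁ hm,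
      conformalEigenvalue_sub_one hm hm₁]
    linear_combination (-2 * γ * h * (Gamma (h + n / 2 + γ - 1) / Gamma (h + n / 2 - γ + 1))) *
      one_div_mul_cancel hd

theorem stmt_3_general (n : ℕ) (hn : 2 ≤ n) (γ : ℝ) (hγ0 : 0 < γ) (hγn : γ < (n : ℝ) / 2)
    (h : ℕ) (Y : MvPolynomial (Fin (n + 1)) ℝ)
    (hhom : Y.IsHomogeneous h)
    (x : Fin (n + 1) → ℝ) (hx : ∑ i : Fin (n + 1), x i ^ 2 = 1) :
    ∑ j : Fin (n + 1), x j *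
        ((Gamma (((h : ℝ) + 1) + (n : ℝ) / 2 + γ) / Gamma (((h : ℝ) + 1) + (n : ℝ) / 2 - γ)) *
            (x j * eval x Y + (1 / (1 - (n : ℝ) - 2 * (h : ℝ))) * eval x (pderiv j Y)) -
          (Gamma (((h : ℝ) - 1) + (n : ℝ) / 2 + γ) / Gamma (((h : ℝ) - 1) + (n : ℝ) / 2 - γ)) *
            (1 / (1 - (n : ℝ) - 2 * (h : ℝ))) * eval x (pderiv j Y)) -
      (Gamma ((h : ℝ) + (n : ℝ) / 2 + γ) / Gamma ((h : ℝ) + (n : ℝ) / 2 - γ)) * eval x Y =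
    γ * ((n : ℝ) + 2 * γ - 2) *
      (Gamma ((h : ℝ) + (n : ℝ) / 2 + γ - 1) / Gamma ((h : ℝ) + (n : ℝ) / 2 - γ + 1)) *
      eval x Y := by
  have hscalar := conformalEigenvalue_commutator (by exact_mod_cast hn) hγ0 hγn h
  unfold conformalEigenvalue at hscalar
  rw [sum_mul_harmonic_decomposition hhom hx, ← hscalar]
  ring

/-- the commutator identity
`Σ_j x_j[P_{2γ}, x_j]Y = γ(n + 2γ − 2)P_{2(γ−1)}Y` of Theorem 1.7, evaluated on
a degree-`h` spherical harmonic `Y` at a point `x ∈ S^n ⊂ ℝ^{n+1}`, written via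
the harmonic decomposition
`x_j·Y = (x_j·Y + |x|²∂_j Y/(1−n−2h)) − |x|²∂_j Y/(1−n−2h)`.
Here `μ_s = Γ(s + n/2 + γ)/Γ(s + n/2 − γ)`. -/
theorem stmt_3 (n : ℕ) (hn : 2 ≤ n) (γ : ℝ) (hγ0 : 0 < γ) (hγn : γ < (n : ℝ) / 2)
    (h : ℕ) (Y : MvPolynomial (Fin (n + 1)) ℝ)
    (hhom : Y.IsHomogeneous h) (hharm : IsFormallyHarmonicReal Y)
    (x : Fin (n + 1) → ℝ) (hx : ∑ i : Fin (n + 1), x i ^ 2 = 1) :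
    ∑ j : Fin (n + 1), x j *
        ((Gamma (((h : ℝ) + 1) + (n : ℝ) / 2 + γ) / Gamma (((h : ℝ) + 1) + (n : ℝ) / 2 - γ)) *
            (x j * eval x Y + (1 / (1 - (n : ℝ) - 2 * (h : ℝ))) * eval x (pderiv j Y)) -
          (Gamma (((h : ℝ) - 1) + (n : ℝ) / 2 + γ) / Gamma (((h : ℝ) - 1) + (n : ℝ) / 2 - γ)) *
            (1 / (1 - (n : ℝ) - 2 * (h : ℝ))) * eval x (pderiv j Y)) -
      (Gamma ((h : ℝ) + (n : ℝ) / 2 + γ) / Gamma ((h : ℝ) + (n : ℝ) / 2 - γ)) * eval x Y =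
    γ * ((n : ℝ) + 2 * γ - 2) *
      (Gamma ((h : ℝ) + (n : ℝ) / 2 + γ - 1) / Gamma ((h : ℝ) + (n : ℝ) / 2 - γ + 1)) *
      eval x Y :=
  stmt_3_general n hn γ hγ0 hγn h Y hhom x hx
end

section
/- Let N ≥ 2 and let j, k be natural numbers. Let P be a polynomial over ℂ in the variables indexed by Fin N ⊕ Fin N which is bihomogeneous of bidegree (j,k) and formally harmonic. Then: (a) for each l, the polynomial pderiv(inr l) P is bihomogeneous of bidegree (j, k−1) (it is zero when k = 0) and formally harmonic; and (b) for each l, the polynomial X_{inl l}·P − (1/(N − 1 + j + k))·(Σ_{i} X_{inl i}·X_{inr i})·pderiv(inr l) P is bihomogeneous of bidegree (j+1, k) and formally harmonic. -/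
/-!
Bidegree `(j, k)` is weighted homogeneity for the `ℕ × ℕ`-valued weight sending `z_i` to `(1, 0)`
and `z̄_i` to `(0, 1)`, so all degree bookkeeping reduces to Mathlib's weighted homogeneous
polynomials. Part (a) holds because `∂_{z̄_l}` lowers the bidegree by `(0, 1)` and commutes with
`Δ = Σ_i ∂_{z_i} ∂_{z̄_i}`. For part (b), `Δ(z_l P) = ∂_{z̄_l} P` when `ΔP = 0`, while the two
partial Euler identities `Σ_i z_i ∂_{z_i} D = a D`, `Σ_i z̄_i ∂_{z̄_i} D = b D` give
`Δ(|z|² D) = (N + a + b) D` for harmonic `D` of bidegree `(a, b)`. With `D = ∂_{z̄_l} P` of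
bidegree `(j, k - 1)` the factor is `N - 1 + j + k`, which the coefficient cancels.
-/

open MvPolynomial

namespace MvPolynomial

variable {σ R : Type*} [CommSemiring R]

theorem pderiv_pderiv_comm (i j : σ) (φ : MvPolynomial σ R) :
    pderiv i (pderiv j φ) = pderiv j (pderiv i φ) := by
  classical
  ext m
  simp only [coeff_pderiv, Finsupp.add_apply, add_right_comm m (Finsupp.single i 1)]
  by_cases h : i = j
  · subst h; rfl
  · simp [h, Ne.symm h, mul_right_comm]

variable {M : Type*} [AddCommMonoid M] {w : σ → M} {φ : MvPolynomial σ R} {m : M}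

theorem IsWeightedHomogeneous.comp_addMonoidHom {M' : Type*} [AddCommMonoid M'] (f : M →+ M')
    (hφ : IsWeightedHomogeneous w φ m) : IsWeightedHomogeneous (f ∘ w) φ (f m) := by
  intro d hd
  rw [← hφ hd, Finsupp.weight_apply, Finsupp.weight_apply, map_finsuppSum]
  simp

theorem IsWeightedHomogeneous.weight_add_eq_of_coeff_pderiv_ne_zero
    (hφ : IsWeightedHomogeneous w φ m) {i : σ} {d : σ →₀ ℕ} (hd : coeff d (pderiv i φ) ≠ 0) :
    Finsupp.weight w d + w i = m := by
  rw [coeff_pderiv] at hd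
  rw [← hφ (left_ne_zero_of_mul hd), map_add, Finsupp.weight_single, one_smul]

theorem IsWeightedHomogeneous.pderiv_eq_zero_of_not_le [LE M] [CanonicallyOrderedAdd M]
    (hφ : IsWeightedHomogeneous w φ m) {i : σ} (hi : ¬ w i ≤ m) : pderiv i φ = 0 := by
  by_contra h
  obtain ⟨d, hd⟩ := ne_zero_iff.mp h
  exact hi (hφ.weight_add_eq_of_coeff_pderiv_ne_zero hd ▸ le_add_self)

end MvPolynomial

open Sum

noncomputable section Laplacian

variable {R : Type*} [CommSemiring R] {N : ℕ}

variable (R N) in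
def normSqPoly : MvPolynomial (Fin N ⊕ Fin N) R := ∑ i, X (inl i) * X (inr i)

variable (R N) in
def formalLaplacian : MvPolynomial (Fin N ⊕ Fin N) R →ₗ[R] MvPolynomial (Fin N ⊕ Fin N) R :=
  ∑ i, (pderiv (inl i)).toLinearMap ∘ₗ (pderiv (inr i)).toLinearMap

theorem formalLaplacian_apply (P : MvPolynomial (Fin N ⊕ Fin N) R) :
    formalLaplacian R N P = ∑ i, pderiv (inl i) (pderiv (inr i) P) := by
  simp [formalLaplacian]

theorem formalLaplacian_pderiv (s : Fin N ⊕ Fin N) (P : MvPolynomial (Fin N ⊕ Fin N) R) :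
    formalLaplacian R N (pderiv s P) = pderiv s (formalLaplacian R N P) := by
  simp only [formalLaplacian_apply, map_sum, pderiv_pderiv_comm _ s]

theorem formalLaplacian_X_inl_mul (l : Fin N) (P : MvPolynomial (Fin N ⊕ Fin N) R) :
    formalLaplacian R N (X (inl l) * P) = pderiv (inr l) P + X (inl l) * formalLaplacian R N P := by
  classical
  simp [formalLaplacian_apply, pderiv_X, Pi.single_apply, Finset.sum_add_distrib,
    Finset.mul_sum, add_comm]

theorem pderiv_inl_normSqPoly (i : Fin N) : pderiv (inl i) (normSqPoly R N) = X (inr i) := by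
  classical
  simp [normSqPoly, pderiv_X, Pi.single_apply]

theorem pderiv_inr_normSqPoly (i : Fin N) : pderiv (inr i) (normSqPoly R N) = X (inl i) := by
  classical
  simp [normSqPoly, pderiv_X, Pi.single_apply]

theorem formalLaplacian_normSqPoly_mul (P : MvPolynomial (Fin N ⊕ Fin N) R) :
    formalLaplacian R N (normSqPoly R N * P) =
      N • P + ∑ i, X (inl i) * pderiv (inl i) P + ∑ i, X (inr i) * pderiv (inr i) P +
        normSqPoly R N * formalLaplacian R N P := by
  have h : ∀ i, pderiv (inl i) (pderiv (inr i) (normSqPoly R N * P)) =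
      P + X (inl i) * pderiv (inl i) P + X (inr i) * pderiv (inr i) P +
        normSqPoly R N * pderiv (inl i) (pderiv (inr i) P) := fun i => by
    simp only [pderiv_mul, map_add, pderiv_inl_normSqPoly, pderiv_inr_normSqPoly, pderiv_X_self]
    ring
  simp only [formalLaplacian_apply, h, Finset.sum_add_distrib, Finset.sum_const, Finset.card_univ,
    Fintype.card_fin, Finset.mul_sum]

end Laplacian

noncomputable section Bihomogeneous

variable {N : ℕ}

variable (N) in
def bidegreeWeight : Fin N ⊕ Fin N → ℕ × ℕ := Sum.elim (fun _ => (1, 0)) (fun _ => (0, 1))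

theorem weight_bidegreeWeight (d : Fin N ⊕ Fin N →₀ ℕ) :
    Finsupp.weight (bidegreeWeight N) d = (∑ i, d (inl i), ∑ i, d (inr i)) := by
  ext <;> simp [Finsupp.weight_eq_sum, Fintype.sum_sum_type, bidegreeWeight, Prod.fst_sum,
    Prod.snd_sum]

theorem isBihomogeneous_iff {P : MvPolynomial (Fin N ⊕ Fin N) ℂ} {j k : ℕ} :
    IsBihomogeneous P j k ↔ IsWeightedHomogeneous (bidegreeWeight N) P (j, k) := by
  simp [IsBihomogeneous, IsWeightedHomogeneous, weight_bidegreeWeight, Prod.ext_iff]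

theorem isFormallyHarmonic_iff {P : MvPolynomial (Fin N ⊕ Fin N) ℂ} :
    IsFormallyHarmonic P ↔ formalLaplacian ℂ N P = 0 := by
  rw [IsFormallyHarmonic, formalLaplacian_apply]

theorem isWeightedHomogeneous_normSqPoly {R : Type*} [CommSemiring R] :
    IsWeightedHomogeneous (bidegreeWeight N) (normSqPoly R N) (1, 1) :=
  IsWeightedHomogeneous.sum _ _ _ fun i _ =>
    (isWeightedHomogeneous_X R _ (inl i)).mul (isWeightedHomogeneous_X R _ (inr i))

variable {P : MvPolynomial (Fin N ⊕ Fin N) ℂ} {j k : ℕ}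

theorem IsBihomogeneous.pderiv_inr_eq_zero (hP : IsBihomogeneous P j 0) (l : Fin N) :
    pderiv (inr l) P = 0 :=
  (isBihomogeneous_iff.mp hP).pderiv_eq_zero_of_not_le (by simp [bidegreeWeight])

theorem IsBihomogeneous.pderiv_inr (hP : IsBihomogeneous P j k) (l : Fin N) :
    IsBihomogeneous (pderiv (inr l) P) j (k - 1) := by
  rw [isBihomogeneous_iff] at hP ⊢
  cases k with
  | zero => simp [(isBihomogeneous_iff.mpr hP).pderiv_inr_eq_zero, isWeightedHomogeneous_zero]
  | succ k => exact hP.pderiv (by simp [bidegreeWeight])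

theorem IsBihomogeneous.X_inl_mul (hP : IsBihomogeneous P j k) (l : Fin N) :
    IsBihomogeneous (X (inl l) * P) (j + 1) k := by
  rw [isBihomogeneous_iff] at hP ⊢
  convert (isWeightedHomogeneous_X ℂ _ (inl l)).mul hP using 1
  simp [bidegreeWeight, add_comm]

theorem IsBihomogeneous.normSqPoly_mul (hP : IsBihomogeneous P j k) :
    IsBihomogeneous (normSqPoly ℂ N * P) (j + 1) (k + 1) := by
  rw [isBihomogeneous_iff] at hP ⊢
  have := isWeightedHomogeneous_normSqPoly.mul hP
  rwa [Prod.mk_add_mk, add_comm 1, add_comm 1] at this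

theorem IsBihomogeneous.sum_X_inl_mul_pderiv (hP : IsBihomogeneous P j k) :
    ∑ i, X (inl i) * pderiv (inl i) P = j • P := by
  have := (isBihomogeneous_iff.mp hP).comp_addMonoidHom (AddMonoidHom.fst ℕ ℕ)
  simpa [Fintype.sum_sum_type, bidegreeWeight] using this.sum_weight_X_mul_pderiv

theorem IsBihomogeneous.sum_X_inr_mul_pderiv (hP : IsBihomogeneous P j k) :
    ∑ i, X (inr i) * pderiv (inr i) P = k • P := by
  have := (isBihomogeneous_iff.mp hP).comp_addMonoidHom (AddMonoidHom.snd ℕ ℕ)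
  simpa [Fintype.sum_sum_type, bidegreeWeight] using this.sum_weight_X_mul_pderiv

theorem IsFormallyHarmonic.pderiv (hP : IsFormallyHarmonic P) (s : Fin N ⊕ Fin N) :
    IsFormallyHarmonic (pderiv s P) := by
  rw [isFormallyHarmonic_iff] at hP ⊢
  rw [formalLaplacian_pderiv, hP, map_zero]

theorem IsBihomogeneous.formalLaplacian_normSqPoly_mul (hP : IsBihomogeneous P j k)
    (hharm : IsFormallyHarmonic P) :
    formalLaplacian ℂ N (normSqPoly ℂ N * P) = (N + j + k) • P := by
  rw [_root_.formalLaplacian_normSqPoly_mul, hP.sum_X_inl_mul_pderiv, hP.sum_X_inr_mul_pderiv,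
    isFormallyHarmonic_iff.mp hharm, mul_zero, add_zero, add_smul, add_smul]

theorem IsBihomogeneous.X_inl_mul_sub (hP : IsBihomogeneous P j k) (l : Fin N) (c : ℂ) :
    IsBihomogeneous (X (inl l) * P - C c * normSqPoly ℂ N * pderiv (inr l) P) (j + 1) k := by
  rcases Nat.eq_zero_or_pos k with rfl | hk
  · rw [hP.pderiv_inr_eq_zero, mul_zero, sub_zero]
    exact hP.X_inl_mul l
  · have hQ := isBihomogeneous_iff.mp (hP.pderiv_inr l).normSqPoly_mul
    rw [Nat.sub_add_cancel hk] at hQ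
    rw [isBihomogeneous_iff, mul_assoc]
    exact (isBihomogeneous_iff.mp (hP.X_inl_mul l)).sub (hQ.C_mul c)

theorem IsBihomogeneous.isFormallyHarmonic_X_inl_mul_sub (hP : IsBihomogeneous P j k)
    (hharm : IsFormallyHarmonic P) (hN : 0 < N) (l : Fin N) :
    IsFormallyHarmonic
      (X (inl l) * P - C (1 / ((N : ℂ) - 1 + j + k)) * normSqPoly ℂ N * pderiv (inr l) P) := by
  rcases Nat.eq_zero_or_pos k with rfl | hk
  · rw [hP.pderiv_inr_eq_zero, mul_zero, sub_zero, isFormallyHarmonic_iff,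
      formalLaplacian_X_inl_mul, isFormallyHarmonic_iff.mp hharm, hP.pderiv_inr_eq_zero, mul_zero,
      add_zero]
  have hc : 1 / ((N : ℂ) - 1 + j + k) * ((N + j + (k - 1) : ℕ) : ℂ) = 1 := by
    rw [Nat.cast_add, Nat.cast_add, Nat.cast_sub hk]
    have : (N : ℂ) - 1 + j + k ≠ 0 := by
      rw [← Nat.cast_one, ← Nat.cast_sub hN]
      exact_mod_cast (by omega : N - 1 + j + k ≠ 0)
    field_simp
    ring
  rw [isFormallyHarmonic_iff, map_sub, formalLaplacian_X_inl_mul, isFormallyHarmonic_iff.mp hharm,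
    mul_assoc, C_mul', map_smul, (hP.pderiv_inr l).formalLaplacian_normSqPoly_mul (hharm.pderiv _),
    ← Nat.cast_smul_eq_nsmul ℂ, smul_smul, hc, one_smul, mul_zero, add_zero, sub_self]

end Bihomogeneous

/-- the harmonic decomposition
`z_l·𝒴_{j,k} = (z_l𝒴_{j,k} − |z|²∂_{z̄_l}𝒴_{j,k}/(n+j+k)) + |z|²∂_{z̄_l}𝒴_{j,k}/(n+j+k)`
into harmonic bihomogeneous parts of bidegrees `(j+1,k)` and `(j,k−1)`, `n = N−1`. -/
theorem stmt_4 (N : ℕ) (hN : 2 ≤ N) (j k : ℕ)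
    (P : MvPolynomial (Fin N ⊕ Fin N) ℂ)
    (hbi : IsBihomogeneous P j k) (hharm : IsFormallyHarmonic P) (l : Fin N) :
    (IsBihomogeneous (pderiv (Sum.inr l) P) j (k - 1) ∧
      (k = 0 → pderiv (Sum.inr l) P = 0) ∧
      IsFormallyHarmonic (pderiv (Sum.inr l) P)) ∧
    (IsBihomogeneous
        (X (Sum.inl l) * P -
          C (1 / ((N : ℂ) - 1 + j + k)) *
            (∑ i : Fin N, X (Sum.inl i) * X (Sum.inr i)) * pderiv (Sum.inr l) P)
        (j + 1) k ∧
      IsFormallyHarmonic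
        (X (Sum.inl l) * P -
          C (1 / ((N : ℂ) - 1 + j + k)) *
            (∑ i : Fin N, X (Sum.inl i) * X (Sum.inr i)) * pderiv (Sum.inr l) P)) := by
  have hR : (∑ i : Fin N, X (Sum.inl i) * X (Sum.inr i) : MvPolynomial (Fin N ⊕ Fin N) ℂ) =
      normSqPoly ℂ N := rfl
  rw [hR]
  exact ⟨⟨hbi.pderiv_inr l, fun hk => (hk ▸ hbi).pderiv_inr_eq_zero l, hharm.pderiv _⟩,
    hbi.X_inl_mul_sub l _, hbi.isFormallyHarmonic_X_inl_mul_sub hharm (by omega) l⟩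
end

section
/- Let n ≥ 1 be a natural number, let γ be a real number with 0 < γ < n + 1, and set w := (γ − n − 1)/2. Then for all natural numbers j, k: (2γ/(n + 1 − γ))·λ^γ_j(w)·λ^γ_k(w) − γ·((n + γ − 1)/2)·λ^{γ−1}_j(w−1)·λ^{γ−1}_k(w) ≥ 0, where λ^γ_j(w) = Γ(j+γ−w)/Γ(j−w), λ^{γ−1}_j(w−1) = Γ(j+γ−w)/Γ(j+1−w) and λ^{γ−1}_k(w) = Γ(k+γ−1−w)/Γ(k−w); moreover equality holds if and only if j = 0 and k = 0. -/
open Real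

/-- spectral positivity, with kernel exactly the constants, of the
operator `(p−2)𝒜_{2γ} − γ(γ−1−w)𝒜_{w−1,w}` on the CR sphere, where
`w = (γ−n−1)/2` and the eigenvalues are written out via `Real.Gamma`. -/
theorem stmt_6 (n : ℕ) (hn : 1 ≤ n) (γ : ℝ) (hγ0 : 0 < γ) (hγn : γ < (n : ℝ) + 1)
    (w : ℝ) (hw : w = (γ - (n : ℝ) - 1) / 2) :
    ∀ j k : ℕ,
      0 ≤ (2 * γ / ((n : ℝ) + 1 - γ)) *
            (Gamma ((j : ℝ) + γ - w) / Gamma ((j : ℝ) - w)) *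
            (Gamma ((k : ℝ) + γ - w) / Gamma ((k : ℝ) - w)) -
          γ * (((n : ℝ) + γ - 1) / 2) *
            (Gamma ((j : ℝ) + γ - w) / Gamma ((j : ℝ) + 1 - w)) *
            (Gamma ((k : ℝ) + γ - 1 - w) / Gamma ((k : ℝ) - w)) ∧
      ((2 * γ / ((n : ℝ) + 1 - γ)) *
            (Gamma ((j : ℝ) + γ - w) / Gamma ((j : ℝ) - w)) *
            (Gamma ((k : ℝ) + γ - w) / Gamma ((k : ℝ) - w)) -
          γ * (((n : ℝ) + γ - 1) / 2) *
            (Gamma ((j : ℝ) + γ - w) / Gamma ((j : ℝ) + 1 - w)) *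
            (Gamma ((k : ℝ) + γ - 1 - w) / Gamma ((k : ℝ) - w)) = 0 ↔
        j = 0 ∧ k = 0) := by
  intro j k
  have hn1 : (1 : ℝ) ≤ (n : ℝ) := by exact_mod_cast hn
  have hw0 : w < 0 := by rw [hw]; linarith
  have hc : 0 < γ - 1 - w := by rw [hw]; linarith
  have hjnn : (0 : ℝ) ≤ (j : ℝ) := Nat.cast_nonneg j
  have hknn : (0 : ℝ) ≤ (k : ℝ) := Nat.cast_nonneg k
  have hja : (0 : ℝ) < (j : ℝ) - w := by linarith
  have hka : (0 : ℝ) < (k : ℝ) - w := by linarith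
  have hjb : (0 : ℝ) < (j : ℝ) + γ - w := by linarith
  have hkc : (0 : ℝ) < (k : ℝ) + γ - 1 - w := by linarith
  have gja := Real.Gamma_pos_of_pos hja
  have gka := Real.Gamma_pos_of_pos hka
  have gjb := Real.Gamma_pos_of_pos hjb
  have gkc := Real.Gamma_pos_of_pos hkc
  have r1 : Gamma ((j : ℝ) + 1 - w) = ((j : ℝ) - w) * Gamma ((j : ℝ) - w) := by
    rw [show (j : ℝ) + 1 - w = ((j : ℝ) - w) + 1 by ring]
    exact Real.Gamma_add_one (ne_of_gt hja)
  have r2 : Gamma ((k : ℝ) + γ - w)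
      = ((k : ℝ) + γ - 1 - w) * Gamma ((k : ℝ) + γ - 1 - w) := by
    rw [show (k : ℝ) + γ - w = ((k : ℝ) + γ - 1 - w) + 1 by ring]
    exact Real.Gamma_add_one (ne_of_gt hkc)
  set C : ℝ := γ * (Gamma ((j : ℝ) + γ - w) / Gamma ((j : ℝ) - w)) *
      (Gamma ((k : ℝ) + γ - 1 - w) / Gamma ((k : ℝ) - w)) /
      ((-w) * ((j : ℝ) - w)) with hC
  set N : ℝ := (j : ℝ) * (k : ℝ) + (j : ℝ) * (γ - 1 - w) + (k : ℝ) * (-w) with hN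
  have hCpos : 0 < C := by
    apply div_pos
    · exact mul_pos (mul_pos hγ0 (div_pos gjb gja)) (div_pos gkc gka)
    · exact mul_pos (by linarith) hja
  have hNnn : 0 ≤ N := by
    have h1 : 0 ≤ (j : ℝ) * (k : ℝ) := mul_nonneg hjnn hknn
    have h2 : 0 ≤ (j : ℝ) * (γ - 1 - w) := mul_nonneg hjnn (le_of_lt hc)
    have h3 : 0 ≤ (k : ℝ) * (-w) := mul_nonneg hknn (by linarith)
    rw [hN]; linarith
  have key : (2 * γ / ((n : ℝ) + 1 - γ)) *
            (Gamma ((j : ℝ) + γ - w) / Gamma ((j : ℝ) - w)) *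
            (Gamma ((k : ℝ) + γ - w) / Gamma ((k : ℝ) - w)) -
          γ * (((n : ℝ) + γ - 1) / 2) *
            (Gamma ((j : ℝ) + γ - w) / Gamma ((j : ℝ) + 1 - w)) *
            (Gamma ((k : ℝ) + γ - 1 - w) / Gamma ((k : ℝ) - w)) = C * N := by
    rw [r1, r2, hC, hN,
      show (n : ℝ) + 1 - γ = -(2 * w) by rw [hw]; ring,
      show (n : ℝ) + γ - 1 = 2 * (γ - 1 - w) by rw [hw]; ring]
    have hwne : w ≠ 0 := ne_of_lt hw0
    field_simp
    ring
  rw [key]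
  constructor
  · exact mul_nonneg (le_of_lt hCpos) hNnn
  · rw [mul_eq_zero]
    constructor
    · rintro (h | h)
      · exact absurd h (ne_of_gt hCpos)
      · have h1 : 0 ≤ (j : ℝ) * (k : ℝ) := mul_nonneg hjnn hknn
        have h2 : 0 ≤ (j : ℝ) * (γ - 1 - w) := mul_nonneg hjnn (le_of_lt hc)
        have h3 : 0 ≤ (k : ℝ) * (-w) := mul_nonneg hknn (by linarith)
        rw [hN] at h
        have hj2 : (j : ℝ) * (γ - 1 - w) = 0 := by linarith
        have hk3 : (k : ℝ) * (-w) = 0 := by linarith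
        have hj : (j : ℝ) = 0 :=
          (mul_eq_zero.mp hj2).resolve_right (ne_of_gt hc)
        have hk : (k : ℝ) = 0 :=
          (mul_eq_zero.mp hk3).resolve_right (by linarith)
        exact ⟨Nat.cast_eq_zero.mp hj, Nat.cast_eq_zero.mp hk⟩
    · rintro ⟨hj, hk⟩
      right
      rw [hN, hj, hk]
      simp
end

section
/- Let n ≥ 1 be a natural number and let γ be a real number with 0 < γ < n/2 and n/2 + γ > 1, and let h be a natural number. Define μ_h(2γ) := Γ(h + n/2 + γ)/Γ(h + n/2 − γ) and μ_h(2γ−2) := Γ(h + n/2 + γ − 1)/Γ(h + n/2 − γ + 1). Then (4γ/(n − 2γ))·μ_h(2γ) − γ·(n + 2γ − 2)·μ_h(2γ−2) = (4γ/(n − 2γ))·h·(h + n − 1)·μ_h(2γ−2). In particular, the left-hand side is nonnegative, and it vanishes if and only if h = 0. -/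
open Real

/-- the spectral identity
`(p−2)P_{2γ} − γ(n+2γ−2)P_{2(γ−1)} = (4γ/(n−2γ))(−Δ_{S^n})P_{2(γ−1)}`
on degree-`h` spherical harmonics, together with nonnegativity and the
characterization of the kernel. -/
theorem stmt_7 (n : ℕ) (hn : 1 ≤ n) (γ : ℝ) (hγ0 : 0 < γ) (hγn : γ < (n : ℝ) / 2)
    (hγ1 : 1 < (n : ℝ) / 2 + γ) (h : ℕ) :
    ((4 * γ / ((n : ℝ) - 2 * γ)) *
          (Gamma ((h : ℝ) + (n : ℝ) / 2 + γ) / Gamma ((h : ℝ) + (n : ℝ) / 2 - γ)) -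
        γ * ((n : ℝ) + 2 * γ - 2) *
          (Gamma ((h : ℝ) + (n : ℝ) / 2 + γ - 1) / Gamma ((h : ℝ) + (n : ℝ) / 2 - γ + 1)) =
      (4 * γ / ((n : ℝ) - 2 * γ)) * (h : ℝ) * ((h : ℝ) + (n : ℝ) - 1) *
        (Gamma ((h : ℝ) + (n : ℝ) / 2 + γ - 1) / Gamma ((h : ℝ) + (n : ℝ) / 2 - γ + 1))) ∧
    0 ≤ (4 * γ / ((n : ℝ) - 2 * γ)) *
          (Gamma ((h : ℝ) + (n : ℝ) / 2 + γ) / Gamma ((h : ℝ) + (n : ℝ) / 2 - γ)) -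
        γ * ((n : ℝ) + 2 * γ - 2) *
          (Gamma ((h : ℝ) + (n : ℝ) / 2 + γ - 1) / Gamma ((h : ℝ) + (n : ℝ) / 2 - γ + 1)) ∧
    ((4 * γ / ((n : ℝ) - 2 * γ)) *
          (Gamma ((h : ℝ) + (n : ℝ) / 2 + γ) / Gamma ((h : ℝ) + (n : ℝ) / 2 - γ)) -
        γ * ((n : ℝ) + 2 * γ - 2) *
          (Gamma ((h : ℝ) + (n : ℝ) / 2 + γ - 1) / Gamma ((h : ℝ) + (n : ℝ) / 2 - γ + 1)) = 0 ↔
      h = 0) := by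
  have hn' : (1 : ℝ) ≤ (n : ℝ) := by exact_mod_cast hn
  have hb : (0 : ℝ) < (h : ℝ) + (n : ℝ) / 2 - γ := by
    have : (0 : ℝ) ≤ (h : ℝ) := Nat.cast_nonneg h
    linarith
  have ha : (0 : ℝ) < (h : ℝ) + (n : ℝ) / 2 + γ - 1 := by
    have : (0 : ℝ) ≤ (h : ℝ) := Nat.cast_nonneg h
    linarith
  have hGa : Gamma ((h : ℝ) + (n : ℝ) / 2 + γ) =
      ((h : ℝ) + (n : ℝ) / 2 + γ - 1) * Gamma ((h : ℝ) + (n : ℝ) / 2 + γ - 1) := by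
    have := Real.Gamma_add_one (ne_of_gt ha)
    rw [show (h : ℝ) + (n : ℝ) / 2 + γ - 1 + 1 = (h : ℝ) + (n : ℝ) / 2 + γ by ring] at this
    exact this
  have hGb : Gamma ((h : ℝ) + (n : ℝ) / 2 - γ + 1) =
      ((h : ℝ) + (n : ℝ) / 2 - γ) * Gamma ((h : ℝ) + (n : ℝ) / 2 - γ) := by
    exact Real.Gamma_add_one (ne_of_gt hb)
  have hGbpos : 0 < Gamma ((h : ℝ) + (n : ℝ) / 2 - γ) := Real.Gamma_pos_of_pos hb
  have hGapos : 0 < Gamma ((h : ℝ) + (n : ℝ) / 2 + γ - 1) := Real.Gamma_pos_of_pos ha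
  have hden : (0 : ℝ) < (n : ℝ) - 2 * γ := by linarith
  have key : (4 * γ / ((n : ℝ) - 2 * γ)) *
          (Gamma ((h : ℝ) + (n : ℝ) / 2 + γ) / Gamma ((h : ℝ) + (n : ℝ) / 2 - γ)) -
        γ * ((n : ℝ) + 2 * γ - 2) *
          (Gamma ((h : ℝ) + (n : ℝ) / 2 + γ - 1) / Gamma ((h : ℝ) + (n : ℝ) / 2 - γ + 1)) =
      (4 * γ / ((n : ℝ) - 2 * γ)) * (h : ℝ) * ((h : ℝ) + (n : ℝ) - 1) *
        (Gamma ((h : ℝ) + (n : ℝ) / 2 + γ - 1) / Gamma ((h : ℝ) + (n : ℝ) / 2 - γ + 1)) := by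
    have e1 : Gamma ((h : ℝ) + (n : ℝ) / 2 + γ) / Gamma ((h : ℝ) + (n : ℝ) / 2 - γ) =
        ((h : ℝ) + (n : ℝ) / 2 + γ - 1) *
          (Gamma ((h : ℝ) + (n : ℝ) / 2 + γ - 1) / Gamma ((h : ℝ) + (n : ℝ) / 2 - γ)) := by
      rw [hGa, mul_div_assoc]
    have e2 : Gamma ((h : ℝ) + (n : ℝ) / 2 + γ - 1) / Gamma ((h : ℝ) + (n : ℝ) / 2 - γ + 1) =
        (Gamma ((h : ℝ) + (n : ℝ) / 2 + γ - 1) / Gamma ((h : ℝ) + (n : ℝ) / 2 - γ)) /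
          ((h : ℝ) + (n : ℝ) / 2 - γ) := by
      rw [hGb, div_mul_eq_div_div_swap]
    rw [e1, e2]
    set t := Gamma ((h : ℝ) + (n : ℝ) / 2 + γ - 1) / Gamma ((h : ℝ) + (n : ℝ) / 2 - γ) with ht
    have hb' : ((h : ℝ) + (n : ℝ) / 2 - γ) ≠ 0 := ne_of_gt hb
    have hd' : ((n : ℝ) - 2 * γ) ≠ 0 := ne_of_gt hden
    have e_b : ((h : ℝ) + (n : ℝ) / 2 - γ) * ((h : ℝ) + (n : ℝ) / 2 - γ)⁻¹ = 1 :=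
      mul_inv_cancel₀ hb'
    have e_d : ((n : ℝ) - 2 * γ) * ((n : ℝ) - 2 * γ)⁻¹ = 1 :=
      mul_inv_cancel₀ hd'
    have hpoly : 4 * γ * (((h : ℝ) + (n : ℝ) / 2 + γ - 1) * ((h : ℝ) + (n : ℝ) / 2 - γ)) -
        γ * ((n : ℝ) + 2 * γ - 2) * ((n : ℝ) - 2 * γ) =
        4 * γ * (h : ℝ) * ((h : ℝ) + (n : ℝ) - 1) := by ring
    linear_combination
      (t * ((n : ℝ) - 2 * γ)⁻¹ * ((h : ℝ) + (n : ℝ) / 2 - γ)⁻¹) * hpoly -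
        (4 * γ * ((h : ℝ) + (n : ℝ) / 2 + γ - 1) * t * ((n : ℝ) - 2 * γ)⁻¹) * e_b +
        (γ * ((n : ℝ) + 2 * γ - 2) * t * ((h : ℝ) + (n : ℝ) / 2 - γ)⁻¹) * e_d
  refine ⟨key, ?_, ?_⟩
  · rw [key]
    have hpos1 : 0 < 4 * γ / ((n : ℝ) - 2 * γ) := by positivity
    have hpos2 : 0 < Gamma ((h : ℝ) + (n : ℝ) / 2 + γ - 1) / Gamma ((h : ℝ) + (n : ℝ) / 2 - γ + 1) := by
      rw [hGb]; positivity
    have hh : (0 : ℝ) ≤ (h : ℝ) := Nat.cast_nonneg h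
    have : (0 : ℝ) ≤ (h : ℝ) + (n : ℝ) - 1 := by linarith
    positivity
  · rw [key]
    constructor
    · intro he
      by_contra hne
      have hh1 : (1 : ℝ) ≤ (h : ℝ) := by
        exact_mod_cast Nat.one_le_iff_ne_zero.mpr hne
      have hpos : 0 < (4 * γ / ((n : ℝ) - 2 * γ)) * (h : ℝ) * ((h : ℝ) + (n : ℝ) - 1) *
          (Gamma ((h : ℝ) + (n : ℝ) / 2 + γ - 1) / Gamma ((h : ℝ) + (n : ℝ) / 2 - γ + 1)) := by
        have h1 : 0 < 4 * γ / ((n : ℝ) - 2 * γ) := by positivity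
        have h2 : 0 < (h : ℝ) := by linarith
        have h3 : 0 < (h : ℝ) + (n : ℝ) - 1 := by linarith
        have h4 : 0 < Gamma ((h : ℝ) + (n : ℝ) / 2 + γ - 1) / Gamma ((h : ℝ) + (n : ℝ) / 2 - γ + 1) := by
          rw [hGb]; positivity
        positivity
      linarith
    · intro he
      subst he
      simp
end
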